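/- arXiv:2108.09854 — 2 statements merged into one kernel-verified Lean document; each statement's English description precedes it below -/
import Mathlib

section
/- Let 1/2 < τ ≤ 1 and let (p_{-j})_{j≥1} satisfy 0 < p_{-j} ≤ 1/2 and n^{-1} Σ_{j=1}^{n} p_{-j}^{-1} = 2 + o(n^{-τ}) as n → ∞ (i.e. γ2 = 1). Let {G_i^{(-j)} : i ≥ 1, j ≥ 1} be a double array of independent geometric random variables with P(G_i^{(-j)} = k) = 2p_{-j}(1 − 2p_{-j})^k, and set r_N = ⌊N^{1/2} log N⌋. Then for every δ > 0, almost surely for all sufficiently large N, Σ_{j=1}^{r_N} Σ_{i=1}^{r_N} G_i^{(-j)} ≤ N^{1 − τ/2 + δ}. -/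
open MeasureTheory ProbabilityTheory Filter Asymptotics

noncomputable section

/-- A standard Wiener process (Brownian motion): continuous paths, `W 0 = 0`,
Gaussian increments, independent increments. -/
def IsStandardWiener {Ω : Type*} [MeasureSpace Ω] (W : ℝ → Ω → ℝ) : Prop :=
  (∀ ω, Continuous fun t => W t ω) ∧
  (∀ ω, W 0 ω = 0) ∧
  (∀ t, Measurable (W t)) ∧
  (∀ s t : ℝ, 0 ≤ s → s ≤ t →
    Measure.map (fun ω => W t ω - W s ω) ℙ = gaussianReal 0 (Real.toNNReal (t - s))) ∧
  (∀ (n : ℕ) (t : ℕ → ℝ), (∀ i, 0 ≤ t i) → Monotone t →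
    iIndepFun
      (fun (i : Fin n) (ω : Ω) => W (t (i.1 + 1)) ω - W (t i.1) ω) ℙ)

/-- Independence of two processes: the σ-algebras they generate are independent. -/
def IndepProcess {Ω : Type*} [MeasureSpace Ω] (W1 W2 : ℝ → Ω → ℝ) : Prop :=
  Indep (⨆ t : ℝ, MeasurableSpace.comap (W1 t) inferInstance)
        (⨆ t : ℝ, MeasurableSpace.comap (W2 t) inferInstance) ℙ

/-- `A₂(t) = γ₁ ∫₀ᵗ 1{w(s) ≥ 0} ds + γ₂ ∫₀ᵗ 1{w(s) < 0} ds` for a path `w`. -/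
def A2fun (γ1 γ2 : ℝ) (w : ℝ → ℝ) (t : ℝ) : ℝ :=
  γ1 * (volume {s : ℝ | s ∈ Set.Icc 0 t ∧ 0 ≤ w s}).toReal +
  γ2 * (volume {s : ℝ | s ∈ Set.Icc 0 t ∧ w s < 0}).toReal

/-- The averaged condition (1.1) on the vertical step probabilities. -/
def AveragedCond (p : ℤ → ℝ) (γ1 γ2 τ : ℝ) : Prop :=
  (∀ j : ℤ, 0 < p j ∧ p j ≤ 1/2) ∧ (∃ j : ℤ, p j < 1/2) ∧
  ((fun n : ℕ => (n : ℝ)⁻¹ * (∑ j ∈ Finset.Icc 1 n, (p (j : ℤ))⁻¹) - 2 * γ1)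
    =o[atTop] fun n : ℕ => (n : ℝ) ^ (-τ)) ∧
  ((fun n : ℕ => (n : ℝ)⁻¹ * (∑ j ∈ Finset.Icc 1 n, (p (-(j : ℤ)))⁻¹) - 2 * γ2)
    =o[atTop] fun n : ℕ => (n : ℝ) ^ (-τ))

/-- The anisotropic random walk on ℤ² started at the origin, with horizontal step
probabilities `1/2 - p j` and vertical step probabilities `p j` on level `j`. -/
def IsAnisotropicRW {Ω : Type*} [MeasureSpace Ω] (p : ℤ → ℝ) (C : ℕ → Ω → ℤ × ℤ) : Prop :=
  (∀ ω, C 0 ω = (0, 0)) ∧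
  (∀ N, Measurable (C N)) ∧
  (∀ (N : ℕ) (path : ℕ → ℤ × ℤ) (k j : ℤ), path N = (k, j) →
    (ℙ {ω | (∀ n ≤ N, C n ω = path n) ∧ C (N + 1) ω = (k + 1, j)}
        = ENNReal.ofReal (1/2 - p j) * ℙ {ω | ∀ n ≤ N, C n ω = path n}) ∧
    (ℙ {ω | (∀ n ≤ N, C n ω = path n) ∧ C (N + 1) ω = (k - 1, j)}
        = ENNReal.ofReal (1/2 - p j) * ℙ {ω | ∀ n ≤ N, C n ω = path n}) ∧
    (ℙ {ω | (∀ n ≤ N, C n ω = path n) ∧ C (N + 1) ω = (k, j + 1)}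
        = ENNReal.ofReal (p j) * ℙ {ω | ∀ n ≤ N, C n ω = path n}) ∧
    (ℙ {ω | (∀ n ≤ N, C n ω = path n) ∧ C (N + 1) ω = (k, j - 1)}
        = ENNReal.ofReal (p j) * ℙ {ω | ∀ n ≤ N, C n ω = path n}))

/-- A simple symmetric random walk on ℤ. -/
def IsSSRW {Ω : Type*} [MeasureSpace Ω] (S : ℕ → Ω → ℤ) : Prop :=
  (∀ ω, S 0 ω = 0) ∧
  (∀ n, Measurable (S n)) ∧
  (iIndepFun (fun (n : ℕ) (ω : Ω) => S (n + 1) ω - S n ω) ℙ) ∧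
  (∀ n : ℕ, ℙ {ω | S (n + 1) ω - S n ω = 1} = 1/2 ∧ ℙ {ω | S (n + 1) ω - S n ω = -1} = 1/2)

/-- Local time of a walk: `ξ(j,n) = #{k : 0 < k ≤ n, S k = j}`. -/
def localTimeRW {Ω : Type*} (S : ℕ → Ω → ℤ) (j : ℤ) (n : ℕ) (ω : Ω) : ℕ :=
  ((Finset.Icc 1 n).filter fun k => S k ω = j).card

/-! Only first moments are needed. A geometric variable with parameter `2q` has mean
`(2q)⁻¹ - 1`, so the double sum `S_N` has mean `r_N · ∑_{j ≤ r_N} ((2q_{-j})⁻¹ - 1)`, which the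
averaged condition bounds by `r_N^{2-τ} = N^{1-τ/2+o(1)}`. Markov's inequality at the dyadic
times `N = 2^{k+1}` makes the probabilities `P(S_{2^{k+1}} ≥ 2^{k(1-τ/2+δ)})` geometrically
summable, so by Borel–Cantelli almost surely only finitely many of these events occur, and since
`S_N` is monotone in `N` this controls all `N`. -/

open scoped ENNReal

theorem lintegral_natCast_eq_of_geometric {Ω : Type*} [MeasurableSpace Ω] {μ : Measure Ω}
    {g : Ω → ℕ} (hg : Measurable g) {α : ℝ} (hα0 : 0 < α) (hα1 : α ≤ 1)
    (hlaw : ∀ k : ℕ, μ {ω | g ω = k} = ENNReal.ofReal (α * (1 - α) ^ k)) :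
    ∫⁻ ω, (g ω : ℝ≥0∞) ∂μ = ENNReal.ofReal (α⁻¹ - 1) := by
  have hr0 : 0 ≤ 1 - α := by linarith
  have hr1 : ‖1 - α‖ < 1 := by rw [Real.norm_of_nonneg hr0]; linarith
  have hterm : ∀ n : ℕ, (n : ℝ≥0∞) * Measure.map g μ {n}
      = ENNReal.ofReal (α * (n * (1 - α) ^ n)) := by
    intro n
    simp only [Measure.map_apply hg (measurableSet_singleton n), Set.preimage,
      Set.mem_singleton_iff]
    rw [hlaw, ← ENNReal.ofReal_natCast, ← ENNReal.ofReal_mul n.cast_nonneg]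
    ring_nf
  have hsum : Summable fun n : ℕ => α * (n * (1 - α) ^ n) := by
    simpa using (summable_pow_mul_geometric_of_norm_lt_one 1 hr1).mul_left α
  rw [← lintegral_map measurable_from_top hg, lintegral_countable', tsum_congr hterm,
    ← ENNReal.ofReal_tsum_of_nonneg (fun n => by positivity) hsum, tsum_mul_left,
    tsum_coe_mul_geometric_of_norm_lt_one hr1, sub_sub_cancel]
  congr 1
  field_simp

theorem ae_eventually_notMem_of_eventually_le {Ω : Type*} [MeasurableSpace Ω] {μ : Measure Ω}
    {s : ℕ → Set Ω} {c : ℕ → ℝ≥0∞} (hc : ∑' k, c k ≠ ∞)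
    (hs : ∀ᶠ k in atTop, μ (s k) ≤ c k) :
    ∀ᵐ ω ∂μ, ∀ᶠ k in atTop, ω ∉ s k := by
  obtain ⟨K, hK⟩ := eventually_atTop.1 hs
  have hshift : ∑' k, μ (s (k + K)) ≠ ∞ :=
    ne_top_of_le_ne_top hc <| (ENNReal.tsum_le_tsum fun k => hK _ le_add_self).trans
      (ENNReal.tsum_comp_le_tsum_of_injective (add_left_injective K) c)
  filter_upwards [ae_eventually_notMem hshift] with ω hω
  rw [← map_add_atTop_eq_nat K]
  exact hω

theorem two_pow_succ_rpow_div_two_pow_rpow (k : ℕ) (a b : ℝ) :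
    ((2 : ℝ) ^ (k + 1)) ^ a / ((2 : ℝ) ^ k) ^ b = 2 ^ a * (2 ^ (a - b)) ^ k := by
  rw [← Real.rpow_pow_comm zero_le_two, ← Real.rpow_pow_comm zero_le_two, pow_succ',
    Real.rpow_sub two_pos, div_pow]
  field_simp

theorem ae_eventually_le_rpow_of_lintegral_le {Ω : Type*} [MeasurableSpace Ω] {μ : Measure Ω}
    {F : ℕ → Ω → ℝ≥0∞} (hF : ∀ N, AEMeasurable (F N) μ) (hmono : ∀ ω, Monotone fun N => F N ω)
    {a b : ℝ} (hab : a < b) (hb : 0 ≤ b)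
    (hmean : ∀ᶠ N : ℕ in atTop, ∫⁻ ω, F N ω ∂μ ≤ ENNReal.ofReal ((N : ℝ) ^ a)) :
    ∀ᵐ ω ∂μ, ∀ᶠ N : ℕ in atTop, F N ω ≤ ENNReal.ofReal ((N : ℝ) ^ b) := by
  set A : ℕ → Set Ω := fun k => {ω | ENNReal.ofReal (((2 : ℝ) ^ k) ^ b) ≤ F (2 ^ (k + 1)) ω}
  have hA : ∀ᶠ k in atTop,
      μ (A k) ≤ ENNReal.ofReal (2 ^ a) * ENNReal.ofReal (2 ^ (a - b)) ^ k := by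
    have hmean' := ((tendsto_pow_atTop_atTop_of_one_lt one_lt_two).comp
      (tendsto_add_atTop_nat 1)).eventually hmean
    filter_upwards [hmean'] with k hk
    have hpos : 0 < ((2 : ℝ) ^ k) ^ b := by positivity
    calc μ (A k)
        ≤ (∫⁻ ω, F (2 ^ (k + 1)) ω ∂μ) / ENNReal.ofReal (((2 : ℝ) ^ k) ^ b) :=
          meas_ge_le_lintegral_div (hF _) (ENNReal.ofReal_pos.2 hpos).ne' ENNReal.ofReal_ne_top
      _ ≤ ENNReal.ofReal (((2 : ℝ) ^ (k + 1)) ^ a) / ENNReal.ofReal (((2 : ℝ) ^ k) ^ b) := by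
          simpa using ENNReal.div_le_div_right hk _
      _ = ENNReal.ofReal (2 ^ a) * ENNReal.ofReal (2 ^ (a - b)) ^ k := by
          rw [← ENNReal.ofReal_div_of_pos hpos, two_pow_succ_rpow_div_two_pow_rpow,
            ENNReal.ofReal_mul (by positivity), ENNReal.ofReal_pow (by positivity)]
  have hsum : ∑' k, ENNReal.ofReal (2 ^ a) * ENNReal.ofReal (2 ^ (a - b)) ^ k ≠ ∞ := by
    rw [ENNReal.tsum_mul_left]
    refine ENNReal.mul_ne_top ENNReal.ofReal_ne_top (tsum_geometric_lt_top.2 ?_).ne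
    exact ENNReal.ofReal_lt_one.2 (Real.rpow_lt_one_of_one_lt_of_neg one_lt_two (by linarith))
  filter_upwards [ae_eventually_notMem_of_eventually_le hsum hA] with ω hω
  obtain ⟨K, hK⟩ := eventually_atTop.1 hω
  filter_upwards [eventually_ge_atTop (2 ^ K)] with N hN
  have hN0 : N ≠ 0 := ((Nat.two_pow_pos K).trans_le hN).ne'
  have hlow : 2 ^ Nat.log 2 N ≤ N := Nat.pow_log_le_self 2 hN0
  have hhigh : N < 2 ^ (Nat.log 2 N + 1) := Nat.lt_pow_succ_log_self one_lt_two N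
  have hKlog : K ≤ Nat.log 2 N := by
    simpa [Nat.log_pow one_lt_two] using Nat.log_mono_right (b := 2) hN
  calc F N ω ≤ F (2 ^ (Nat.log 2 N + 1)) ω := hmono ω hhigh.le
    _ ≤ ENNReal.ofReal (((2 : ℝ) ^ Nat.log 2 N) ^ b) := (not_le.1 (hK _ hKlog)).le
    _ ≤ ENNReal.ofReal ((N : ℝ) ^ b) := by
        gcongr
        exact_mod_cast hlow

theorem lintegral_ofReal_sum_sum_geometric {Ω ι κ : Type*} [MeasurableSpace Ω] {μ : Measure Ω}
    {G : ι → κ → Ω → ℕ} (hG : ∀ j i, Measurable (G j i)) {α : ι → ℝ}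
    (hα : ∀ j, 0 < α j ∧ α j ≤ 1)
    (hlaw : ∀ j i k, μ {ω | G j i ω = k} = ENNReal.ofReal (α j * (1 - α j) ^ k))
    (s : Finset ι) (t : Finset κ) :
    ∫⁻ ω, ENNReal.ofReal (∑ j ∈ s, ∑ i ∈ t, (G j i ω : ℝ)) ∂μ
      = ENNReal.ofReal (t.card * ∑ j ∈ s, ((α j)⁻¹ - 1)) := by
  have hmean : ∀ j i, ∫⁻ ω, (G j i ω : ℝ≥0∞) ∂μ = ENNReal.ofReal ((α j)⁻¹ - 1) := fun j i =>
    lintegral_natCast_eq_of_geometric (hG j i) (hα j).1 (hα j).2 (hlaw j i)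
  have hmean_nonneg : ∀ j, 0 ≤ (α j)⁻¹ - 1 := fun j =>
    sub_nonneg.2 ((one_le_inv₀ (hα j).1).2 (hα j).2)
  simp only [← Nat.cast_sum, ENNReal.ofReal_natCast]
  push_cast
  have hGm : ∀ j i, Measurable fun ω => (G j i ω : ℝ≥0∞) := fun j i =>
    measurable_from_top.comp (hG j i)
  rw [lintegral_finsetSum _ fun j _ => Finset.measurable_sum _ fun i _ => hGm j i]
  simp only [lintegral_finsetSum _ fun i _ => hGm _ i, hmean, Finset.sum_const, nsmul_eq_mul]
  rw [ENNReal.ofReal_mul (by positivity), ENNReal.ofReal_natCast,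
    ENNReal.ofReal_sum_of_nonneg fun j _ => hmean_nonneg j, Finset.mul_sum]

theorem eventually_sub_mul_le_rpow_of_isLittleO {x : ℕ → ℝ} {c τ : ℝ}
    (h : (fun n : ℕ => (n : ℝ)⁻¹ * x n - c) =o[atTop] fun n : ℕ => (n : ℝ) ^ (-τ)) :
    ∀ᶠ n : ℕ in atTop, x n - c * n ≤ (n : ℝ) ^ (1 - τ) := by
  filter_upwards [h.bound one_pos, eventually_gt_atTop 0] with n hn hn0
  have hn0' : (0 : ℝ) < n := by exact_mod_cast hn0
  rw [Real.norm_of_nonneg (Real.rpow_nonneg hn0'.le _), one_mul] at hn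
  calc x n - c * n = n * ((n : ℝ)⁻¹ * x n - c) := by field_simp
    _ ≤ n * (n : ℝ) ^ (-τ) := by gcongr; exact (Real.le_norm_self _).trans hn
    _ = (n : ℝ) ^ (1 - τ) := by rw [sub_eq_add_neg, Real.rpow_add hn0', Real.rpow_one]

/-- The radius `r_N` of the paper. -/
def sqrtMulLogFloor (N : ℕ) : ℕ := ⌊(N : ℝ) ^ ((1 : ℝ) / 2) * Real.log N⌋₊

theorem monotone_sqrtMulLogFloor : Monotone sqrtMulLogFloor := by
  intro m n hmn
  have hmn' : (m : ℝ) ≤ n := by exact_mod_cast hmn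
  have hlog : Real.log m ≤ Real.log n := by
    rcases m.eq_zero_or_pos with rfl | hm
    · simpa using Real.log_natCast_nonneg n
    · exact Real.log_le_log (by exact_mod_cast hm) hmn'
  exact Nat.floor_mono (mul_le_mul (Real.rpow_le_rpow m.cast_nonneg hmn' (by norm_num)) hlog
    (Real.log_natCast_nonneg m) (by positivity))

theorem tendsto_sqrtMulLogFloor_atTop : Tendsto sqrtMulLogFloor atTop atTop :=
  tendsto_nat_floor_atTop.comp <|
    ((tendsto_rpow_atTop (by norm_num)).atTop_mul_atTop₀ Real.tendsto_log_atTop).comp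
      tendsto_natCast_atTop_atTop

theorem eventually_sqrtMulLogFloor_le_rpow {ε : ℝ} (hε : 0 < ε) :
    ∀ᶠ N : ℕ in atTop, (sqrtMulLogFloor N : ℝ) ≤ (N : ℝ) ^ ((1 : ℝ) / 2 + ε) := by
  filter_upwards [tendsto_natCast_atTop_atTop.eventually
    ((isLittleO_log_rpow_atTop hε).bound one_pos), eventually_gt_atTop 0] with N hlog hN
  have hN' : (0 : ℝ) < N := by exact_mod_cast hN
  rw [Real.norm_of_nonneg (Real.log_natCast_nonneg N), Real.norm_of_nonneg (by positivity),
    one_mul] at hlog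
  calc (sqrtMulLogFloor N : ℝ) ≤ (N : ℝ) ^ ((1 : ℝ) / 2) * Real.log N :=
        Nat.floor_le (mul_nonneg (by positivity) (Real.log_natCast_nonneg N))
    _ ≤ (N : ℝ) ^ ((1 : ℝ) / 2) * (N : ℝ) ^ ε := by gcongr
    _ = (N : ℝ) ^ ((1 : ℝ) / 2 + ε) := (Real.rpow_add hN' _ _).symm

theorem eventually_sqrtMulLogFloor_mul_le_rpow {τ δ : ℝ} (hτ0 : 0 ≤ τ) (hτ2 : τ ≤ 2)
    (hδ : 0 < δ) {x : ℕ → ℝ} (hx : ∀ᶠ n : ℕ in atTop, x n ≤ (n : ℝ) ^ (1 - τ)) :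
    ∀ᶠ N : ℕ in atTop,
      (sqrtMulLogFloor N : ℝ) * x (sqrtMulLogFloor N) ≤ (N : ℝ) ^ (1 - τ / 2 + δ) := by
  filter_upwards [tendsto_sqrtMulLogFloor_atTop.eventually hx,
    tendsto_sqrtMulLogFloor_atTop.eventually_ge_atTop 1,
    eventually_sqrtMulLogFloor_le_rpow (half_pos hδ), eventually_ge_atTop 1]
    with N hxN hr1 hrN hN
  set r := sqrtMulLogFloor N
  have hr : (0 : ℝ) < r := by exact_mod_cast hr1
  have hN1 : (1 : ℝ) ≤ N := by exact_mod_cast hN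
  calc (r : ℝ) * x r ≤ r * (r : ℝ) ^ (1 - τ) := by gcongr
    _ = (r : ℝ) ^ (2 - τ) := by
        rw [show (2 : ℝ) - τ = 1 + (1 - τ) by ring, Real.rpow_add hr, Real.rpow_one]
    _ ≤ ((N : ℝ) ^ ((1 : ℝ) / 2 + δ / 2)) ^ (2 - τ) := by gcongr
    _ = (N : ℝ) ^ (((1 : ℝ) / 2 + δ / 2) * (2 - τ)) := (Real.rpow_mul (by positivity) _ _).symm
    _ ≤ (N : ℝ) ^ (1 - τ / 2 + δ) := Real.rpow_le_rpow_of_exponent_le hN1 (by nlinarith)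

theorem monotone_sum_sum_of_nonneg {ι : Type*} {s : ℕ → Finset ι} (hs : Monotone s)
    {f : ι → ι → ℝ} (hf : ∀ j i, 0 ≤ f j i) :
    Monotone fun n => ∑ j ∈ s n, ∑ i ∈ s n, f j i := by
  intro m n hmn
  calc ∑ j ∈ s m, ∑ i ∈ s m, f j i ≤ ∑ j ∈ s m, ∑ i ∈ s n, f j i :=
        Finset.sum_le_sum fun j _ =>
          Finset.sum_le_sum_of_subset_of_nonneg (hs hmn) fun i _ _ => hf j i
    _ ≤ ∑ j ∈ s n, ∑ i ∈ s n, f j i :=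
        Finset.sum_le_sum_of_subset_of_nonneg (hs hmn) fun j _ _ =>
          Finset.sum_nonneg fun i _ => hf j i

theorem geometric_negative_side_bound_general
    {Ω : Type*} [MeasureSpace Ω]
    (τ : ℝ) (hτ1 : 1/2 < τ) (hτ2 : τ ≤ 1)
    (q : ℕ → ℝ) (hq : ∀ j : ℕ, 0 < q j ∧ q j ≤ 1/2)
    (hav : (fun n : ℕ => (n : ℝ)⁻¹ * (∑ j ∈ Finset.Icc 1 n, (q j)⁻¹) - 2)
      =o[atTop] fun n : ℕ => (n : ℝ) ^ (-τ))
    (G : ℕ → ℕ → Ω → ℕ)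
    (hGmeas : ∀ (j i : ℕ), Measurable (G j i))
    (hGgeom : ∀ (j i k : ℕ),
      ℙ {ω | G j i ω = k} = ENNReal.ofReal (2 * q j * (1 - 2 * q j) ^ k)) :
    ∀ δ > (0 : ℝ), ∀ᵐ ω ∂(ℙ : Measure Ω), ∀ᶠ N : ℕ in atTop,
      (∑ j ∈ Finset.Icc 1 (⌊(N : ℝ) ^ ((1 : ℝ)/2) * Real.log N⌋₊),
        ∑ i ∈ Finset.Icc 1 (⌊(N : ℝ) ^ ((1 : ℝ)/2) * Real.log N⌋₊), (G j i ω : ℝ))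
        ≤ (N : ℝ) ^ (1 - τ/2 + δ) := by
  intro δ hδ
  set S : ℕ → Ω → ℝ := fun N ω => ∑ j ∈ Finset.Icc 1 (sqrtMulLogFloor N),
    ∑ i ∈ Finset.Icc 1 (sqrtMulLogFloor N), (G j i ω : ℝ)
  have hα : ∀ j, 0 < 2 * q j ∧ 2 * q j ≤ 1 := fun j => by constructor <;> linarith [hq j]
  have hexcess : ∀ᶠ n : ℕ in atTop,
      ∑ j ∈ Finset.Icc 1 n, ((2 * q j)⁻¹ - 1) ≤ (n : ℝ) ^ (1 - τ) := by
    filter_upwards [eventually_sub_mul_le_rpow_of_isLittleO hav] with n hn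
    rw [Finset.sum_sub_distrib, Finset.sum_const, Nat.card_Icc, Nat.add_sub_cancel, nsmul_one]
    simp only [mul_inv, ← Finset.mul_sum]
    linarith [Real.rpow_nonneg n.cast_nonneg (1 - τ)]
  have hmean : ∀ᶠ N : ℕ in atTop,
      ∫⁻ ω, ENNReal.ofReal (S N ω) ≤ ENNReal.ofReal ((N : ℝ) ^ (1 - τ / 2 + δ / 2)) := by
    filter_upwards [eventually_sqrtMulLogFloor_mul_le_rpow (by linarith) (by linarith)
      (half_pos hδ) hexcess] with N hN
    rw [lintegral_ofReal_sum_sum_geometric hGmeas hα hGgeom, Nat.card_Icc, Nat.add_sub_cancel]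
    exact ENNReal.ofReal_le_ofReal hN
  have hSmono : ∀ ω, Monotone fun N => ENNReal.ofReal (S N ω) := fun ω =>
    ENNReal.ofReal_mono.comp <| (monotone_sum_sum_of_nonneg
      (fun _ _ h => Finset.Icc_subset_Icc_right h) fun j i => (G j i ω).cast_nonneg).comp
      monotone_sqrtMulLogFloor
  have hSmeas : ∀ N, AEMeasurable (fun ω => ENNReal.ofReal (S N ω)) ℙ := fun N => by fun_prop
  filter_upwards [ae_eventually_le_rpow_of_lintegral_le (b := 1 - τ / 2 + δ) hSmeas hSmono
    (by linarith) (by linarith) hmean] with ω hω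
  filter_upwards [hω] with N hN
  exact (ENNReal.ofReal_le_ofReal_iff (by positivity)).1 hN

/-- **Estimate (3.7)/(3.9).** Let `1/2 < τ ≤ 1` and `0 < p_{-j} ≤ 1/2` with
`n⁻¹ Σ_{j=1}^n p_{-j}⁻¹ = 2 + o(n^{-τ})` (the case `γ₂ = 1`). For a double array of
independent geometric variables `G_i^{(-j)}` with parameters `2p_{-j}` and
`r_N = ⌊N^{1/2} log N⌋`, for every `δ > 0`, almost surely
`Σ_{j=1}^{r_N} Σ_{i=1}^{r_N} G_i^{(-j)} ≤ N^{1 - τ/2 + δ}` for all large `N`. -/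
theorem geometric_negative_side_bound
    {Ω : Type*} [MeasureSpace Ω] [IsProbabilityMeasure (ℙ : Measure Ω)]
    (τ : ℝ) (hτ1 : 1/2 < τ) (hτ2 : τ ≤ 1)
    (q : ℕ → ℝ) (hq : ∀ j : ℕ, 0 < q j ∧ q j ≤ 1/2)
    (hav : (fun n : ℕ => (n : ℝ)⁻¹ * (∑ j ∈ Finset.Icc 1 n, (q j)⁻¹) - 2)
      =o[atTop] fun n : ℕ => (n : ℝ) ^ (-τ))
    (G : ℕ → ℕ → Ω → ℕ)
    (hGmeas : ∀ (j i : ℕ), Measurable (G j i))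
    (hGgeom : ∀ (j i k : ℕ),
      ℙ {ω | G j i ω = k} = ENNReal.ofReal (2 * q j * (1 - 2 * q j) ^ k))
    (hGindep : iIndepFun (fun (ji : ℕ × ℕ) ω => G ji.1 ji.2 ω) ℙ) :
    ∀ δ > (0 : ℝ), ∀ᵐ ω ∂(ℙ : Measure Ω), ∀ᶠ N : ℕ in atTop,
      (∑ j ∈ Finset.Icc 1 (⌊(N : ℝ) ^ ((1 : ℝ)/2) * Real.log N⌋₊),
        ∑ i ∈ Finset.Icc 1 (⌊(N : ℝ) ^ ((1 : ℝ)/2) * Real.log N⌋₊), (G j i ω : ℝ))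
        ≤ (N : ℝ) ^ (1 - τ/2 + δ) :=
  geometric_negative_side_bound_general τ hτ1 hτ2 q hq hav G hGmeas hGgeom
end
end

section
/- Let γ1, γ2 ≥ 1. Suppose a probability space carries a simple symmetric random walk S with local time ξ and a standard Wiener process W admitting a local time process η (i.e. for every t ≥ 0 and every bounded Borel f, ∫_0^t f(W(s)) ds = ∫_ℝ f(x) η(x,t) dx) such that, for every ε > 0, |S(n) − W(n)| = O(n^{1/4+ε}) and sup_{x∈ℤ} |ξ(x,n) − η(x,n)| = O(n^{1/4+ε}) almost surely as n → ∞. Define Â(n) = γ1 Σ_{j=0}^{∞} ξ(j,n) + γ2 Σ_{j=1}^{∞} ξ(−j,n) and A(n) = γ1 ∫_0^n 1{W(s) ≥ 0} ds + γ2 ∫_0^n 1{W(s) < 0} ds. Then for every ε > 0, almost surely as n → ∞, |Â(n) − A(n)| = O(n^{3/4+ε}). -/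
open MeasureTheory ProbabilityTheory Filter Asymptotics

noncomputable section

/-!
Both `Â(n)` and `A(n)` are `γ₁ · (time spent at or above 0) + γ₂ · (time spent below 0)`, and the
walk's count `#{k ∈ [1, n] | S k ≥ 0}` is the Lebesgue measure of `{s ∈ (0, n] | S ⌈s⌉ ≥ 0}`. Hence
`|Â(n) - A(n)| ≤ (|γ₁| + |γ₂|) · Leb {s ∈ (0, n] | W s and S ⌈s⌉ differ in sign}`.

By the coupling `|S k - W k| ≤ C k^{1/4+δ}`, a sign disagreement at time `s ≤ n` forces
`|W s| ≤ n^{1/4+2δ}` or `|W ⌈s⌉ - W s| ≥ n^δ` once `n` is large. The expected time `W` spends in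
`[-m, m]` before `n` is at most `2 m √n`, so Borel–Cantelli along `n = 2^i` bounds the first set by
`O(n^{3/4+3δ})` almost surely. The second set has expected measure at most `2 n exp(-n^{2δ}/2)`,
which is summable, so its measure almost surely tends to `0`.
-/

open scoped ENNReal NNReal Topology symmDiff

section Gaussian

lemma hasSubgaussianMGF_id_gaussianReal {v c : ℝ≥0} (hvc : v ≤ c) :
    HasSubgaussianMGF id c (gaussianReal 0 v) where
  integrable_exp_mul := integrable_exp_mul_gaussianReal
  mgf_le t := by
    rw [mgf_gaussianReal Measure.map_id, zero_mul, zero_add]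
    gcongr

lemma gaussianReal_abs_ge_le {v : ℝ≥0} (hv : v ≤ 1) {r : ℝ} (hr : 0 ≤ r) :
    (gaussianReal 0 v).real {x | r ≤ |x|} ≤ 2 * Real.exp (-r ^ 2 / 2) := by
  have hX := hasSubgaussianMGF_id_gaussianReal hv
  have hsplit : {x : ℝ | r ≤ |x|} = {x | r ≤ id x} ∪ {x | r ≤ (-id) x} := by
    ext x; simp [le_abs', le_neg, or_comm]
  rw [hsplit]
  refine (measureReal_union_le _ _).trans ?_
  have h1 := hX.measure_ge_le hr
  have h2 := hX.neg.measure_ge_le hr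
  simp only [NNReal.coe_one, mul_one] at h1 h2
  linarith

lemma gaussianPDFReal_le_inv_sqrt (μ : ℝ) (v : ℝ≥0) (x : ℝ) :
    gaussianPDFReal μ v x ≤ (√(2 * Real.pi * v))⁻¹ := by
  rw [gaussianPDFReal]
  refine mul_le_of_le_one_right (by positivity) (Real.exp_le_one_iff.2 ?_)
  exact div_nonpos_of_nonpos_of_nonneg (neg_nonpos.2 (sq_nonneg _)) (by positivity)

lemma gaussianReal_Icc_le {v : ℝ≥0} (hv : v ≠ 0) (μ a b : ℝ) :
    gaussianReal μ v (Set.Icc a b) ≤ ENNReal.ofReal ((b - a) / √(2 * Real.pi * v)) := by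
  calc gaussianReal μ v (Set.Icc a b)
      ≤ ∫⁻ _ in Set.Icc a b, ENNReal.ofReal (√(2 * Real.pi * v))⁻¹ := by
        rw [gaussianReal_apply _ hv]
        exact setLIntegral_mono (by fun_prop) fun x _ =>
          ENNReal.ofReal_le_ofReal (gaussianPDFReal_le_inv_sqrt μ v x)
    _ = ENNReal.ofReal ((b - a) / √(2 * Real.pi * v)) := by
        rw [setLIntegral_const, Real.volume_Icc, ← ENNReal.ofReal_mul (by positivity),
          div_eq_inv_mul]

end Gaussian

section RealAnalysis

lemma integral_Ioc_rpow_neg_half (x : ℝ) (hx : 0 ≤ x) :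
    ∫ s in Set.Ioc 0 x, s ^ (-(1 / 2) : ℝ) = 2 * x ^ (1 / 2 : ℝ) := by
  rw [← intervalIntegral.integral_of_le hx, integral_rpow (Or.inl (by norm_num)),
    Real.zero_rpow (by norm_num)]
  norm_num
  ring

lemma summable_mul_exp_neg_mul_rpow {c p : ℝ} (hc : 0 < c) (hp : 0 < p) :
    Summable fun n : ℕ => (n : ℝ) * Real.exp (-c * (n : ℝ) ^ p) := by
  have hlim : Tendsto (fun n : ℕ => (n : ℝ) ^ (3 / p * p) * Real.exp (-c * (n : ℝ) ^ p))
      atTop (𝓝 0) := by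
    have := (tendsto_rpow_mul_exp_neg_mul_atTop_nhds_zero (3 / p) c hc).comp
      ((tendsto_rpow_atTop hp).comp tendsto_natCast_atTop_atTop)
    refine this.congr fun n => ?_
    simp only [Function.comp_apply, ← Real.rpow_mul n.cast_nonneg, mul_comm p]
  have hO := (isBigO_refl (fun n : ℕ => (n : ℝ) ^ (-2 : ℝ)) atTop).mul (hlim.isBigO_one ℝ)
  refine summable_of_isBigO_nat' (Real.summable_nat_rpow.2 (by norm_num : (-2 : ℝ) < -1)) ?_
  refine (hO.congr' ?_ (by simp)).trans (isBigO_refl _ _)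
  filter_upwards [eventually_gt_atTop 0] with n hn
  have hn' : (0 : ℝ) < n := by exact_mod_cast hn
  rw [div_mul_cancel₀ _ hp.ne', ← mul_assoc, ← Real.rpow_add hn']
  norm_num

lemma Asymptotics.IsBigO.exists_abs_le_mul_rpow_of_le {f : ℕ → ℝ} {q : ℝ} (hq : 0 ≤ q)
    (hf : f =O[atTop] fun n : ℕ => (n : ℝ) ^ q) :
    ∃ C, ∀ k n : ℕ, 1 ≤ k → k ≤ n → |f k| ≤ C * (n : ℝ) ^ q := by
  obtain ⟨C, hC⟩ := isBigO_iff.1 (hf.nat_of_atTop (l := 𝓟 {k | 1 ≤ k})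
    (eventually_principal.2 fun k hk h =>
      absurd h (Real.rpow_pos_of_pos (by exact_mod_cast hk) _).ne'))
  refine ⟨|C|, fun k n hk hkn => ((eventually_principal.1 hC) k hk).trans ?_⟩
  rw [Real.norm_eq_abs, abs_of_nonneg (by positivity)]
  gcongr
  exact le_abs_self C

lemma eventually_mul_rpow_add_rpow_le (C : ℝ) {q δ : ℝ} (hδ : 0 < δ) (hδq : δ ≤ q) :
    ∀ᶠ n : ℕ in atTop, C * (n : ℝ) ^ q + (n : ℝ) ^ δ ≤ (n : ℝ) ^ (q + δ) := by
  filter_upwards [((tendsto_rpow_atTop hδ).comp tendsto_natCast_atTop_atTop).eventually_ge_atTop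
    (|C| + 1), eventually_ge_atTop 1] with n hCn hn
  have hn' : (1 : ℝ) ≤ n := by exact_mod_cast hn
  have hle := Real.rpow_le_rpow_of_exponent_le hn' hδq
  have hpos : 0 ≤ (n : ℝ) ^ q := by positivity
  simp only [Function.comp_apply] at hCn
  rw [Real.rpow_add (by positivity)]
  nlinarith [mul_le_mul_of_nonneg_left hCn hpos, le_abs_self C]

end RealAnalysis

lemma exists_le_two_pow_le_two_mul {I n : ℕ} (hn : 2 ^ I ≤ n) :
    ∃ i, I ≤ i ∧ n ≤ 2 ^ i ∧ 2 ^ i ≤ 2 * n := by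
  have hn0 : n ≠ 0 := Nat.one_le_iff_ne_zero.1 (Nat.one_le_two_pow.trans hn)
  refine ⟨Nat.log 2 n + 1, ?_, (Nat.lt_pow_succ_log_self one_lt_two n).le, ?_⟩
  · exact Nat.le_succ_of_le ((Nat.le_log_iff_pow_le one_lt_two hn0).2 hn)
  · rw [pow_succ, mul_comm]
    exact Nat.mul_le_mul_left 2 (Nat.pow_log_le_self 2 hn0)

section BorelCantelli

variable {Ω : Type*} [MeasurableSpace Ω] {μ : Measure Ω}

lemma ae_tendsto_zero_of_tsum_lintegral_ne_top {X : ℕ → Ω → ℝ≥0∞}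
    (hX : ∀ n, AEMeasurable (X n) μ) (h : ∑' n, ∫⁻ ω, X n ω ∂μ ≠ ∞) :
    ∀ᵐ ω ∂μ, Tendsto (fun n => X n ω) atTop (𝓝 0) := by
  rw [← lintegral_tsum hX] at h
  filter_upwards [ae_lt_top' (AEMeasurable.tsum hX) h] with ω hω
  exact ENNReal.tendsto_atTop_zero_of_tsum_ne_top hω.ne

/-- Borel–Cantelli along `n = 2 ^ i`; monotonicity fills the gaps. -/
lemma ae_eventually_le_rpow_of_monotone {X : ℕ → Ω → ℝ≥0∞}
    (hX : ∀ n, AEMeasurable (X n) μ) (hmono : ∀ ω, Monotone fun n => X n ω)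
    {C a b : ℝ} (hab : a < b) (hb : 0 ≤ b)
    (hC : ∀ n, 1 ≤ n → ∫⁻ ω, X n ω ∂μ ≤ ENNReal.ofReal (C * (n : ℝ) ^ a)) :
    ∀ᵐ ω ∂μ, ∀ᶠ n : ℕ in atTop, X n ω ≤ ENNReal.ofReal (2 ^ b * (n : ℝ) ^ b) := by
  set c : ℕ → ℝ≥0∞ := fun i => ENNReal.ofReal (((2 ^ i : ℕ) : ℝ) ^ b) with hc
  have hc0 : ∀ i, c i ≠ 0 := fun i => by simp [hc]; positivity
  have hctop : ∀ i, c i ≠ ∞ := fun i => ENNReal.ofReal_ne_top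
  have hmean : ∀ i, ∫⁻ ω, X (2 ^ i) ω / c i ∂μ ≤ ENNReal.ofReal (C * (2 ^ (a - b)) ^ i) := by
    intro i
    simp_rw [div_eq_mul_inv]
    rw [lintegral_mul_const' _ _ (ENNReal.inv_ne_top.2 (hc0 i)), ← div_eq_mul_inv]
    refine (ENNReal.div_le_div_right (hC _ Nat.one_le_two_pow) _).trans_eq ?_
    rw [hc, ← ENNReal.ofReal_div_of_pos (by positivity)]
    congr 1
    push_cast
    rw [mul_div_assoc, ← Real.rpow_sub (by positivity), ← Real.rpow_natCast,
      ← Real.rpow_mul (by norm_num), ← Real.rpow_natCast, ← Real.rpow_mul (by norm_num),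
      mul_comm (a - b)]
  have hsum : Summable fun i : ℕ => C * (2 ^ (a - b) : ℝ) ^ i :=
    (summable_geometric_of_lt_one (by positivity)
      (Real.rpow_lt_one_of_one_lt_of_neg one_lt_two (by linarith))).mul_left C
  filter_upwards [ae_tendsto_zero_of_tsum_lintegral_ne_top (fun i => (hX _).div_const _)
    (ne_top_of_le_ne_top hsum.tsum_ofReal_ne_top (ENNReal.tsum_le_tsum hmean))] with ω hω
  obtain ⟨I, hI⟩ := eventually_atTop.1 (hω.eventually (gt_mem_nhds zero_lt_one))
  refine eventually_atTop.2 ⟨2 ^ I, fun n hn => ?_⟩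
  obtain ⟨i, hIi, hni, hin⟩ := exists_le_two_pow_le_two_mul hn
  calc X n ω ≤ X (2 ^ i) ω := hmono ω hni
    _ ≤ c i := by
        simpa using ((ENNReal.div_lt_iff (Or.inl (hc0 i)) (Or.inl (hctop i))).1 (hI i hIi)).le
    _ ≤ ENNReal.ofReal (2 ^ b * (n : ℝ) ^ b) := by
        rw [← Real.mul_rpow (by norm_num) (by positivity)]
        exact ENNReal.ofReal_le_ofReal
          (Real.rpow_le_rpow (by positivity) (by exact_mod_cast hin) hb)

end BorelCantelli

lemma lintegral_volume_setOf_le {Ω : Type*} [MeasurableSpace Ω] {μ : Measure Ω} [SFinite μ]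
    {P : Ω → ℝ → Prop} (hP : MeasurableSet {p : Ω × ℝ | P p.1 p.2}) {I : Set ℝ}
    (hI : MeasurableSet I) {g : ℝ → ℝ≥0∞} (hg : ∀ s ∈ I, μ {ω | P ω s} ≤ g s) :
    ∫⁻ ω, volume {s | s ∈ I ∧ P ω s} ∂μ ≤ ∫⁻ s in I, g s := by
  have hB : MeasurableSet {p : Ω × ℝ | p.2 ∈ I ∧ P p.1 p.2} := (measurable_snd hI).inter hP
  calc ∫⁻ ω, volume {s | s ∈ I ∧ P ω s} ∂μ
      = ∫⁻ s, μ {ω | s ∈ I ∧ P ω s} :=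
        (Measure.prod_apply hB).symm.trans (Measure.prod_apply_symm hB)
    _ = ∫⁻ s in I, μ {ω | P ω s} := by
        rw [← lintegral_indicator hI]
        congr 1 with s
        by_cases hs : s ∈ I <;> simp [hs]
    _ ≤ ∫⁻ s in I, g s := setLIntegral_mono' hI hg

namespace IsStandardWiener

variable {Ω : Type*} [MeasureSpace Ω] {W : ℝ → Ω → ℝ}

lemma continuous (hW : IsStandardWiener W) (ω : Ω) : Continuous fun t => W t ω := hW.1 ω

protected lemma measurable (hW : IsStandardWiener W) (t : ℝ) : Measurable (W t) := hW.2.2.1 t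

lemma measurable_uncurry (hW : IsStandardWiener W) : Measurable fun p : Ω × ℝ => W p.2 p.1 :=
  (measurable_uncurry_of_continuous_of_measurable hW.continuous hW.measurable).comp
    measurable_swap

lemma measurable_uncurry_ceil (hW : IsStandardWiener W) :
    Measurable fun p : Ω × ℝ => W ⌈p.2⌉₊ p.1 :=
  hW.measurable_uncurry.comp (measurable_fst.prodMk
    (measurable_from_top.comp (Nat.measurable_ceil.comp measurable_snd)))

lemma map_sub (hW : IsStandardWiener W) {s t : ℝ} (hs : 0 ≤ s) (hst : s ≤ t) :
    Measure.map (fun ω => W t ω - W s ω) ℙ = gaussianReal 0 (t - s).toNNReal :=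
  hW.2.2.2.1 s t hs hst

lemma map (hW : IsStandardWiener W) {t : ℝ} (ht : 0 ≤ t) :
    Measure.map (W t) ℙ = gaussianReal 0 t.toNNReal := by
  simpa [hW.2.1] using hW.map_sub le_rfl ht

lemma measure_abs_le_le (hW : IsStandardWiener W) {s : ℝ} (hs : 0 < s) {m : ℝ} (hm : 0 ≤ m) :
    ℙ {ω | |W s ω| ≤ m} ≤ ENNReal.ofReal (m * s ^ (-(1 / 2) : ℝ)) := by
  have hset : {x : ℝ | |x| ≤ m} = Set.Icc (-m) m := by ext x; simp [abs_le]
  rw [show {ω | |W s ω| ≤ m} = W s ⁻¹' {x | |x| ≤ m} from rfl,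
    ← Measure.map_apply (hW.measurable s) (measurableSet_le measurable_abs measurable_const),
    hW.map hs.le, hset]
  refine (gaussianReal_Icc_le (by simpa using hs) _ _ _).trans (ENNReal.ofReal_le_ofReal ?_)
  have h2π : 2 ≤ √(2 * Real.pi) := Real.le_sqrt_of_sq_le (by nlinarith [Real.pi_gt_three])
  rw [Real.coe_toNNReal _ hs.le, Real.rpow_neg hs.le, ← Real.sqrt_eq_rpow, ← div_eq_mul_inv,
    Real.sqrt_mul' _ hs.le, sub_neg_eq_add, ← two_mul, mul_comm (√_), ← div_div, mul_div_assoc,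
    div_le_iff₀ (by positivity), mul_comm]
  exact mul_le_mul_of_nonneg_left h2π (by positivity)

lemma measureReal_le_abs_sub_le (hW : IsStandardWiener W) {s t : ℝ} (hs : 0 ≤ s) (hst : s ≤ t)
    (hts : t ≤ s + 1) {r : ℝ} (hr : 0 ≤ r) :
    (ℙ : Measure Ω).real {ω | r ≤ |W t ω - W s ω|} ≤ 2 * Real.exp (-r ^ 2 / 2) := by
  rw [show {ω | r ≤ |W t ω - W s ω|} = (fun ω => W t ω - W s ω) ⁻¹' {x | r ≤ |x|} from rfl,
    ← map_measureReal_apply (f := fun ω => W t ω - W s ω) ((hW.measurable t).sub (hW.measurable s))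
      (measurableSet_le measurable_const measurable_abs), hW.map_sub hs hst]
  exact gaussianReal_abs_ge_le (by simp; linarith) hr

section Finite

variable [IsFiniteMeasure (ℙ : Measure Ω)]

lemma lintegral_volume_abs_le_le (hW : IsStandardWiener W) (n : ℕ) {m : ℝ} (hm : 0 ≤ m) :
    ∫⁻ ω, volume {s | s ∈ Set.Ioc 0 (n : ℝ) ∧ |W s ω| ≤ m}
      ≤ ENNReal.ofReal (2 * m * (n : ℝ) ^ (1 / 2 : ℝ)) := by
  have hint : IntegrableOn (fun s : ℝ => m * s ^ (-(1 / 2) : ℝ)) (Set.Ioc 0 n) := by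
    refine (intervalIntegrable_iff_integrableOn_Ioc_of_le n.cast_nonneg).1 ?_
    exact (intervalIntegral.intervalIntegrable_rpow' (by norm_num)).const_mul m
  refine (lintegral_volume_setOf_le (P := fun ω s => |W s ω| ≤ m)
    (measurableSet_le hW.measurable_uncurry.abs measurable_const) measurableSet_Ioc
    fun s hs => hW.measure_abs_le_le hs.1 hm).trans_eq ?_
  rw [← ofReal_integral_eq_lintegral_ofReal hint, integral_const_mul,
    integral_Ioc_rpow_neg_half _ n.cast_nonneg, mul_left_comm, mul_assoc]
  exact (ae_restrict_iff' measurableSet_Ioc).2 (.of_forall fun s hs =>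
    mul_nonneg hm (Real.rpow_nonneg hs.1.le _))

lemma lintegral_volume_le_abs_sub_ceil_le (hW : IsStandardWiener W) (n : ℕ) {r : ℝ} (hr : 0 ≤ r) :
    ∫⁻ ω, volume {s | s ∈ Set.Ioc 0 (n : ℝ) ∧ r ≤ |W ⌈s⌉₊ ω - W s ω|}
      ≤ ENNReal.ofReal (n * (2 * Real.exp (-r ^ 2 / 2))) := by
  refine (lintegral_volume_setOf_le (P := fun ω s => r ≤ |W ⌈s⌉₊ ω - W s ω|)
    (g := fun _ => ENNReal.ofReal (2 * Real.exp (-r ^ 2 / 2)))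
    (measurableSet_le measurable_const
      (hW.measurable_uncurry_ceil.sub hW.measurable_uncurry).abs)
    measurableSet_Ioc fun s hs => ?_).trans_eq ?_
  · rw [← ofReal_measureReal]
    exact ENNReal.ofReal_le_ofReal (hW.measureReal_le_abs_sub_le hs.1.le (Nat.le_ceil s)
      (Nat.ceil_lt_add_one hs.1.le).le hr)
  · rw [setLIntegral_const, Real.volume_Ioc, sub_zero, ← ENNReal.ofReal_mul (by positivity),
      mul_comm]

lemma ae_eventually_volume_abs_le_rpow_le (hW : IsStandardWiener W) {p b : ℝ} (hp : 0 ≤ p)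
    (hb : p + 1 / 2 < b) :
    ∀ᵐ ω, ∀ᶠ n : ℕ in atTop, volume {s | s ∈ Set.Ioc 0 (n : ℝ) ∧ |W s ω| ≤ (n : ℝ) ^ p}
      ≤ ENNReal.ofReal (2 ^ b * (n : ℝ) ^ b) := by
  refine ae_eventually_le_rpow_of_monotone (C := 2) (fun n => ?_) (fun ω n n' hnn' => ?_) hb
    (by linarith) (fun n hn => ?_)
  · exact (measurable_measure_prodMk_left ((measurable_snd measurableSet_Ioc).inter
      (measurableSet_le hW.measurable_uncurry.abs measurable_const))).aemeasurable
  · have hcast : (n : ℝ) ≤ n' := by exact_mod_cast hnn'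
    exact measure_mono fun s hs => ⟨⟨hs.1.1, hs.1.2.trans hcast⟩,
      hs.2.trans (Real.rpow_le_rpow n.cast_nonneg hcast hp)⟩
  · have hn' : (0 : ℝ) < n := by exact_mod_cast hn
    refine (hW.lintegral_volume_abs_le_le n (by positivity)).trans_eq ?_
    rw [mul_assoc, ← Real.rpow_add hn']

lemma ae_tendsto_volume_rpow_le_abs_sub_ceil (hW : IsStandardWiener W) {δ : ℝ} (hδ : 0 < δ) :
    ∀ᵐ ω, Tendsto (fun n : ℕ =>
      volume {s | s ∈ Set.Ioc 0 (n : ℝ) ∧ (n : ℝ) ^ δ ≤ |W ⌈s⌉₊ ω - W s ω|}) atTop (𝓝 0) := by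
  refine ae_tendsto_zero_of_tsum_lintegral_ne_top (fun n => ?_) ?_
  · exact (measurable_measure_prodMk_left ((measurable_snd measurableSet_Ioc).inter
      (measurableSet_le measurable_const
        (hW.measurable_uncurry_ceil.sub hW.measurable_uncurry).abs))).aemeasurable
  have hsum := (summable_mul_exp_neg_mul_rpow (c := 1 / 2) (p := 2 * δ) (by norm_num)
    (by positivity)).mul_left 2
  refine ne_top_of_le_ne_top hsum.tsum_ofReal_ne_top (ENNReal.tsum_le_tsum fun n =>
    (hW.lintegral_volume_le_abs_sub_ceil_le n (by positivity)).trans_eq ?_)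
  rw [← Real.rpow_natCast, ← Real.rpow_mul n.cast_nonneg]
  ring_nf

end Finite

end IsStandardWiener

section Occupation

open Finset

lemma volume_preimage_natCeil {T : Finset ℕ} (hT : 0 ∉ T) :
    volume ((Nat.ceil : ℝ → ℕ) ⁻¹' T) = #T := by
  rw [← sum_measure_preimage_singleton T fun k _ => by
    rcases eq_or_ne k 0 with rfl | hk
    · rw [Nat.preimage_ceil_zero]; exact measurableSet_Iic
    · rw [Nat.preimage_ceil_of_ne_zero hk]; exact measurableSet_Ioc]
  rw [card_eq_sum_ones, Nat.cast_sum, Nat.cast_one]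
  refine sum_congr rfl fun k hk => ?_
  rw [Nat.preimage_ceil_of_ne_zero (ne_of_mem_of_not_mem hk hT), Real.volume_Ioc,
    Nat.cast_sub (Nat.one_le_iff_ne_zero.2 (ne_of_mem_of_not_mem hk hT))]
  simp

lemma volume_setOf_natCeil (σ : ℕ → Prop) [DecidablePred σ] (n : ℕ) :
    volume {s : ℝ | s ∈ Set.Ioc 0 (n : ℝ) ∧ σ ⌈s⌉₊} = #{k ∈ Icc 1 n | σ k} := by
  rw [← volume_preimage_natCeil (by simp)]
  congr 1
  ext s
  simp [Nat.one_le_ceil_iff, Nat.ceil_le]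

/-- `#{k ∈ [1, n] | σ k}` is the measure of `{s ∈ (0, n] | σ ⌈s⌉}`. -/
lemma abs_card_filter_sub_volume_le {P : ℝ → Prop} (hP : MeasurableSet {s | P s})
    (σ : ℕ → Prop) [DecidablePred σ] (n : ℕ) :
    |(#{k ∈ Icc 1 n | σ k} : ℝ) - volume.real {s : ℝ | s ∈ Set.Icc 0 (n : ℝ) ∧ P s}|
      ≤ volume.real {s : ℝ | s ∈ Set.Ioc 0 (n : ℝ) ∧ ¬(P s ↔ σ ⌈s⌉₊)} := by
  have hIcc : volume.real {s : ℝ | s ∈ Set.Icc 0 (n : ℝ) ∧ P s}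
      = volume.real {s : ℝ | s ∈ Set.Ioc 0 (n : ℝ) ∧ P s} :=
    measureReal_congr (Ioc_ae_eq_Icc.symm.inter (ae_eq_refl {s | P s}))
  have hfin (Q : ℝ → Prop) : volume {s : ℝ | s ∈ Set.Ioc 0 (n : ℝ) ∧ Q s} ≠ ∞ :=
    ne_top_of_le_ne_top (by simp) (measure_mono fun s hs => hs.1)
  rw [← ENNReal.toReal_natCast, ← volume_setOf_natCeil, hIcc]
  have hσ : MeasurableSet {s : ℝ | σ ⌈s⌉₊} :=
    Nat.measurable_ceil (.of_discrete : MeasurableSet {k | σ k})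
  refine (abs_measureReal_sub_le_measureReal_symmDiff'
    (measurableSet_Ioc.inter hσ).nullMeasurableSet
    (measurableSet_Ioc.inter hP).nullMeasurableSet (hfin _) (hfin _)).trans
    (measureReal_mono ?_ (hfin _))
  intro s hs
  simp only [Set.mem_symmDiff, Set.mem_inter_iff, Set.mem_ofPred_eq] at hs ⊢
  tauto

end Occupation

section LocalTime

open Finset

lemma tsum_card_filter_eq_of_injective {α β : Type*} [DecidableEq β] (s : Finset α) (f : α → β)
    {g : ℕ → β} (hg : Function.Injective g) [DecidablePred (· ∈ Set.range g)] :
    ∑' j, (#{k ∈ s | f k = g j} : ℝ) = #{k ∈ s | f k ∈ Set.range g} := by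
  have hfiber (k : α) :
      HasSum (fun j => if f k = g j then (1 : ℝ) else 0) (if f k ∈ Set.range g then 1 else 0) := by
    by_cases hk : f k ∈ Set.range g
    · obtain ⟨j₀, hj₀⟩ := hk
      simpa [← hj₀, hg.eq_iff, eq_comm] using hasSum_ite_eq j₀ (1 : ℝ)
    · have hne (j : ℕ) : f k ≠ g j := fun h => hk ⟨j, h.symm⟩
      simp [hk, hne]
  simp only [card_filter, Nat.cast_sum, Nat.cast_ite, Nat.cast_one, Nat.cast_zero]
  exact (hasSum_sum fun k _ => hfiber k).tsum_eq

variable {Ω : Type*} (S : ℕ → Ω → ℤ) (n : ℕ) (ω : Ω)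

lemma tsum_localTimeRW_natCast :
    ∑' j : ℕ, (localTimeRW S j n ω : ℝ) = #{k ∈ Icc 1 n | 0 ≤ S k ω} := by
  classical
  simp only [localTimeRW]
  rw [tsum_card_filter_eq_of_injective _ _ Nat.cast_injective]
  refine congrArg _ (congrArg _ (filter_congr fun k _ => ?_))
  simp

lemma tsum_localTimeRW_neg_natCast_sub_one :
    ∑' j : ℕ, (localTimeRW S (-(j : ℤ) - 1) n ω : ℝ) = #{k ∈ Icc 1 n | S k ω < 0} := by
  classical
  simp only [localTimeRW]
  rw [tsum_card_filter_eq_of_injective _ _ (g := fun j : ℕ => -(j : ℤ) - 1)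
    fun i j h => by simpa using h]
  refine congrArg _ (congrArg _ (filter_congr fun k _ => ⟨?_, fun h => ?_⟩))
  · rintro ⟨j, hj⟩
    simp only at hj
    omega
  · exact ⟨(-S k ω - 1).toNat, by simp only; omega⟩

end LocalTime

section SignMismatch

lemma nonneg_iff_nonneg_of_abs_sub_lt {x y : ℝ} (h : |y - x| < |x|) : 0 ≤ x ↔ 0 ≤ y := by
  rcases le_or_gt 0 x with hx | hx
  · rw [abs_of_nonneg hx] at h
    exact iff_of_true hx (by linarith [(abs_lt.1 h).1])
  · rw [abs_of_neg hx] at h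
    exact iff_of_false hx.not_ge (by linarith [(abs_lt.1 h).2])

lemma setOf_sign_ne_subset {w : ℝ → ℝ} {x : ℕ → ℤ} {n : ℕ} {a r m : ℝ}
    (hx : ∀ k, 1 ≤ k → k ≤ n → |(x k : ℝ) - w k| ≤ a) (harm : a + r ≤ m) :
    {s | s ∈ Set.Ioc 0 (n : ℝ) ∧ ¬(0 ≤ w s ↔ 0 ≤ x ⌈s⌉₊)}
      ⊆ {s | s ∈ Set.Ioc 0 (n : ℝ) ∧ |w s| ≤ m}
        ∪ {s | s ∈ Set.Ioc 0 (n : ℝ) ∧ r ≤ |w ⌈s⌉₊ - w s|} := by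
  rintro s ⟨hs, hsign⟩
  by_contra hcontra
  simp only [Set.mem_union, Set.mem_ofPred_eq, hs, true_and, not_or, not_le] at hcontra
  have hk := hx ⌈s⌉₊ (Nat.one_le_ceil_iff.2 hs.1) (Nat.ceil_le.2 hs.2)
  refine hsign ((nonneg_iff_nonneg_of_abs_sub_lt ?_).trans Int.cast_nonneg_iff)
  calc |(x ⌈s⌉₊ : ℝ) - w s| ≤ |(x ⌈s⌉₊ : ℝ) - w ⌈s⌉₊| + |w ⌈s⌉₊ - w s| := abs_sub_le _ _ _
    _ < m := by linarith [hcontra.2]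
    _ < |w s| := hcontra.1

open Finset

lemma abs_card_filter_sub_A2fun_le (γ1 γ2 : ℝ) {w : ℝ → ℝ} (hw : Measurable w) (x : ℕ → ℤ)
    (n : ℕ) :
    |(γ1 * #{k ∈ Icc 1 n | 0 ≤ x k} + γ2 * #{k ∈ Icc 1 n | x k < 0}) - A2fun γ1 γ2 w n|
      ≤ (|γ1| + |γ2|) * volume.real {s | s ∈ Set.Ioc 0 (n : ℝ) ∧ ¬(0 ≤ w s ↔ 0 ≤ x ⌈s⌉₊)} := by
  have hnonneg := abs_card_filter_sub_volume_le (P := fun s => 0 ≤ w s)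
    (measurableSet_le measurable_const hw) (fun k => 0 ≤ x k) n
  have hneg := abs_card_filter_sub_volume_le (P := fun s => w s < 0)
    (measurableSet_lt hw measurable_const) (fun k => x k < 0) n
  have hmismatch : {s | s ∈ Set.Ioc 0 (n : ℝ) ∧ ¬(w s < 0 ↔ x ⌈s⌉₊ < 0)}
      = {s | s ∈ Set.Ioc 0 (n : ℝ) ∧ ¬(0 ≤ w s ↔ 0 ≤ x ⌈s⌉₊)} := by
    simp only [← not_le, not_iff_not]
  rw [hmismatch] at hneg
  simp only [A2fun, ← measureReal_def]
  set D := volume.real {s | s ∈ Set.Ioc 0 (n : ℝ) ∧ ¬(0 ≤ w s ↔ 0 ≤ x ⌈s⌉₊)}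
  calc _ = |γ1 * (#{k ∈ Icc 1 n | 0 ≤ x k} - volume.real {s | s ∈ Set.Icc 0 (n : ℝ) ∧ 0 ≤ w s})
        + γ2 * (#{k ∈ Icc 1 n | x k < 0} - volume.real {s | s ∈ Set.Icc 0 (n : ℝ) ∧ w s < 0})| := by
        ring_nf
    _ ≤ |γ1| * D + |γ2| * D := by
        refine (abs_add_le _ _).trans ?_
        rw [abs_mul, abs_mul]
        gcongr
    _ = (|γ1| + |γ2|) * D := by ring

lemma abs_card_filter_sub_A2fun_le_of_abs_sub_le (γ1 γ2 : ℝ) {w : ℝ → ℝ} (hw : Continuous w)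
    {x : ℕ → ℤ} {n : ℕ} {a r m : ℝ} (hx : ∀ k, 1 ≤ k → k ≤ n → |(x k : ℝ) - w k| ≤ a)
    (harm : a + r ≤ m) :
    |(γ1 * #{k ∈ Icc 1 n | 0 ≤ x k} + γ2 * #{k ∈ Icc 1 n | x k < 0}) - A2fun γ1 γ2 w n|
      ≤ (|γ1| + |γ2|) * (volume.real {s | s ∈ Set.Ioc 0 (n : ℝ) ∧ |w s| ≤ m}
        + volume.real {s | s ∈ Set.Ioc 0 (n : ℝ) ∧ r ≤ |w ⌈s⌉₊ - w s|}) := by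
  have hfin : volume ({s | s ∈ Set.Ioc 0 (n : ℝ) ∧ |w s| ≤ m}
      ∪ {s | s ∈ Set.Ioc 0 (n : ℝ) ∧ r ≤ |w ⌈s⌉₊ - w s|}) ≠ ∞ :=
    ne_top_of_le_ne_top measure_Ioc_lt_top.ne
      (measure_mono (Set.union_subset (fun s hs => hs.1) (fun s hs => hs.1)))
  refine (abs_card_filter_sub_A2fun_le γ1 γ2 hw.measurable x n).trans ?_
  gcongr
  exact (measureReal_mono (setOf_sign_ne_subset hx harm) hfin).trans (measureReal_union_le _ _)

end SignMismatch

theorem Ahat_A_approx_general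
    {Ω : Type*} [MeasureSpace Ω] [IsProbabilityMeasure (ℙ : Measure Ω)]
    (γ1 γ2 : ℝ)
    (S : ℕ → Ω → ℤ)
    (W : ℝ → Ω → ℝ) (hW : IsStandardWiener W)
    (hSW : ∀ ε > (0 : ℝ), ∀ᵐ ω ∂(ℙ : Measure Ω),
      (fun n : ℕ => (S n ω : ℝ) - W (n : ℝ) ω) =O[atTop]
        fun n : ℕ => (n : ℝ) ^ (1/4 + ε)) :
    ∀ ε > (0 : ℝ), ∀ᵐ ω ∂(ℙ : Measure Ω),
      (fun n : ℕ =>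
          |(γ1 * ∑' j : ℕ, (localTimeRW S (j : ℤ) n ω : ℝ) +
            γ2 * ∑' j : ℕ, (localTimeRW S (-(j : ℤ) - 1) n ω : ℝ)) -
            A2fun γ1 γ2 (fun s => W s ω) (n : ℝ)|)
        =O[atTop] fun n : ℕ => (n : ℝ) ^ (3/4 + ε) := by
  intro ε hε
  obtain ⟨δ, hδ, rfl⟩ : ∃ δ, 0 < δ ∧ ε = 3 * δ := ⟨ε / 3, by positivity, by ring⟩
  filter_upwards [hW.ae_eventually_volume_abs_le_rpow_le (p := 1 / 4 + δ + δ)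
    (b := 3 / 4 + 3 * δ) (by positivity) (by linarith),
    hW.ae_tendsto_volume_rpow_le_abs_sub_ceil hδ, hSW δ hδ] with ω hnear hosc hcoupling
  obtain ⟨C, hC⟩ := hcoupling.exists_abs_le_mul_rpow_of_le (by positivity)
  refine isBigO_iff.2 ⟨(|γ1| + |γ2|) * (2 ^ (3 / 4 + 3 * δ) + 1), ?_⟩
  filter_upwards [hnear, hosc.eventually (gt_mem_nhds zero_lt_one),
    eventually_mul_rpow_add_rpow_le C (q := 1 / 4 + δ) hδ (by linarith), eventually_ge_atTop 1]
    with n hnear hosc hgrowth hn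
  have hnb : 1 ≤ (n : ℝ) ^ (3 / 4 + 3 * δ) :=
    Real.one_le_rpow (by exact_mod_cast hn) (by positivity)
  rw [tsum_localTimeRW_natCast, tsum_localTimeRW_neg_natCast_sub_one, Real.norm_eq_abs, abs_abs,
    Real.norm_of_nonneg (by positivity)]
  calc _ ≤ (|γ1| + |γ2|) * (2 ^ (3 / 4 + 3 * δ) * (n : ℝ) ^ (3 / 4 + 3 * δ) + 1) := by
        refine (abs_card_filter_sub_A2fun_le_of_abs_sub_le γ1 γ2 (hW.continuous ω)
          (fun k => hC k n) hgrowth).trans ?_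
        gcongr
        · exact ENNReal.toReal_le_of_le_ofReal (by positivity) hnear
        · exact ENNReal.toReal_le_of_le_ofReal zero_le_one (by simpa using hosc.le)
    _ ≤ (|γ1| + |γ2|) * (2 ^ (3 / 4 + 3 * δ) + 1) * (n : ℝ) ^ (3 / 4 + 3 * δ) := by
        rw [mul_assoc]
        gcongr
        linarith

/-- **Lemma J.** Let `γ₁, γ₂ ≥ 1`. Suppose a probability space carries a simple symmetric
random walk `S` with local time `ξ` and a standard Wiener process `W` with local time
process `η` (occupation density), such that `|S(n) - W(n)| = O(n^{1/4+ε})` and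
`sup_{x∈ℤ} |ξ(x,n) - η(x,n)| = O(n^{1/4+ε})` a.s. for every `ε > 0`. Then for
`Â(n) = γ₁ Σ_{j≥0} ξ(j,n) + γ₂ Σ_{j≥1} ξ(-j,n)` and
`A(n) = γ₁ Leb{s ∈ [0,n] : W(s) ≥ 0} + γ₂ Leb{s ∈ [0,n] : W(s) < 0}`, for every `ε > 0`,
almost surely `|Â(n) - A(n)| = O(n^{3/4+ε})`. -/
theorem Ahat_A_approx
    {Ω : Type*} [MeasureSpace Ω] [IsProbabilityMeasure (ℙ : Measure Ω)]
    (γ1 γ2 : ℝ) (hγ1 : 1 ≤ γ1) (hγ2 : 1 ≤ γ2)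
    (S : ℕ → Ω → ℤ) (hS : IsSSRW S)
    (W : ℝ → Ω → ℝ) (hW : IsStandardWiener W)
    (η : ℝ → ℝ → Ω → ℝ)
    (hη : ∀ ω, ∀ t : ℝ, 0 ≤ t → ∀ f : ℝ → ℝ, Measurable f → (∃ c : ℝ, ∀ x, |f x| ≤ c) →
      (∫ s in Set.Icc (0 : ℝ) t, f (W s ω)) = ∫ x : ℝ, f x * η x t ω)
    (hSW : ∀ ε > (0 : ℝ), ∀ᵐ ω ∂(ℙ : Measure Ω),
      (fun n : ℕ => (S n ω : ℝ) - W (n : ℝ) ω) =O[atTop]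
        fun n : ℕ => (n : ℝ) ^ (1/4 + ε))
    (hξη : ∀ ε > (0 : ℝ), ∀ᵐ ω ∂(ℙ : Measure Ω), ∃ c : ℝ, ∀ᶠ n : ℕ in atTop, ∀ x : ℤ,
      |(localTimeRW S x n ω : ℝ) - η (x : ℝ) (n : ℝ) ω| ≤ c * (n : ℝ) ^ (1/4 + ε)) :
    ∀ ε > (0 : ℝ), ∀ᵐ ω ∂(ℙ : Measure Ω),
      (fun n : ℕ =>
          |(γ1 * ∑' j : ℕ, (localTimeRW S (j : ℤ) n ω : ℝ) +
            γ2 * ∑' j : ℕ, (localTimeRW S (-(j : ℤ) - 1) n ω : ℝ)) -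
            A2fun γ1 γ2 (fun s => W s ω) (n : ℝ)|)
        =O[atTop] fun n : ℕ => (n : ℝ) ^ (3/4 + ε) :=
  Ahat_A_approx_general γ1 γ2 S W hW hSW
end
end
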